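/- Assume condition (∗). If the sequence of cardinalities ⟨|X_i| : i ∈ I⟩ is finite-to-one, i.e. there is no infinite J ⊆ I such that |X_i| = |X_j| for all i, j ∈ J, then ⋃_{i∈I} X_i is a reversible structure. -/

import Mathlib

universe u v w

section Defs

variable {α : Type*} {β : Type*}

/-- `f` is a homomorphism from `⟨α, r⟩` to `⟨β, s⟩`. -/
def IsHom (r : α → α → Prop) (s : β → β → Prop) (f : α → β) : Prop :=
  ∀ x y, r x y → s (f x) (f y)

/-- A condensation is a bijective homomorphism. -/
def IsCond (r : α → α → Prop) (s : β → β → Prop) (f : α → β) : Prop :=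
  Function.Bijective f ∧ IsHom r s f

/-- A monomorphism is an injective homomorphism. -/
def IsMono (r : α → α → Prop) (s : β → β → Prop) (f : α → β) : Prop :=
  Function.Injective f ∧ IsHom r s f

/-- An isomorphism of binary structures. -/
def IsIso (r : α → α → Prop) (s : β → β → Prop) (f : α → β) : Prop :=
  Function.Bijective f ∧ ∀ x y, r x y ↔ s (f x) (f y)

/-- A binary structure is reversible iff every self-condensation is an automorphism. -/
def Reversible (r : α → α → Prop) : Prop :=
  ∀ f : α → α, IsCond r r f → IsIso r r f

/-- A binary structure is connected iff it has exactly one component: it is nonempty and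
the least equivalence relation containing `r` relates any two points. -/
def Connected (r : α → α → Prop) : Prop :=
  Nonempty α ∧ ∀ x y, Relation.EqvGen r x y

/-- The relation of the disjoint union of the structures `⟨X i, R i⟩`. -/
def unionRel {I : Type*} {X : I → Type*} (R : ∀ i, X i → X i → Prop) :
    (Σ i, X i) → (Σ i, X i) → Prop :=
  fun a b => ∃ h : a.1 = b.1, R b.1 (h ▸ a.2) b.2

end Defs

/-!
A condensation `f` of the union maps each (connected) component into a single component, so it
induces a surjection `σ` of the index set with `|X i| ≤ |X (σ i)|`. As every cardinal is the size of
only finitely many components, induction on the cardinal shows that `σ` is a bijection permuting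
each of these finite sets; hence every component is mapped back into itself by some iterate
`f^[n + 1]`. Restricted to `X i` that iterate is a self-condensation, so an automorphism by
reversibility of `X i`, and therefore `f` cannot create new edges inside `X i`.
-/

open Function Set

section LevelSets

variable {ι β : Type*} [LinearOrder β] [WellFoundedLT β] {κ : ι → β}

/- Induction on the level: each lower level set is the image of itself under `c`, so by
injectivity nothing from level `b` can land in it. -/
theorem bijOn_levelSet_of_injective {c : ι → ι} (hc : Injective c) (hle : ∀ i, κ (c i) ≤ κ i)
    (hfin : ∀ b, {i | κ i = b}.Finite) (b : β) : BijOn c {i | κ i = b} {i | κ i = b} := by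
  induction b using WellFoundedLT.induction with
  | _ b ih =>
  refine ((hfin b).injOn_iff_bijOn_of_mapsTo fun j (hj : κ j = b) => ?_).mp hc.injOn
  by_contra hne
  have hlt : κ (c j) < b := (hj ▸ hle j).lt_of_ne hne
  obtain ⟨k, hk, hkj⟩ := (ih _ hlt).surjOn (rfl : κ (c j) = κ (c j))
  rw [hc hkj] at hk
  exact hne (hk.symm.trans hj)

theorem Set.Finite.mem_periodicPts_of_mapsTo {f : ι → ι} {s : Set ι} (hs : s.Finite)
    (hmaps : MapsTo f s s) (hinj : InjOn f s) {x : ι} (hx : x ∈ s) : x ∈ periodicPts f := by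
  have := hs.to_subtype
  obtain ⟨n, hn, hper⟩ :=
    mem_periodicPts.mp ((hmaps.restrict_inj.mpr hinj).mem_periodicPts ⟨x, hx⟩)
  exact mk_mem_periodicPts hn (hper.map (g := Subtype.val) fun _ => rfl)

theorem Function.Surjective.injective_and_periodicPts_eq_univ {σ : ι → ι} (hσ : Surjective σ)
    (hle : ∀ i, κ i ≤ κ (σ i)) (hfin : ∀ b, {i | κ i = b}.Finite) :
    Injective σ ∧ periodicPts σ = univ := by
  obtain ⟨c, hcσ⟩ := hσ.hasRightInverse
  have hbij := bijOn_levelSet_of_injective hcσ.injective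
    (fun j => by simpa only [hcσ j] using hle (c j)) hfin
  have hσc : LeftInverse c σ :=
    hcσ.rightInverse_of_surjective fun i => (hbij (κ i)).surjOn (rfl : κ i = κ i) |>.imp
      fun _ => And.right
  have hσinj : Injective σ := hσc.injective
  refine ⟨hσinj, eq_univ_of_forall fun i => ?_⟩
  have hκσ : ∀ j, κ (σ j) = κ j := fun j => by
    simpa only [hσc j] using ((hbij (κ (σ j))).mapsTo (rfl : κ (σ j) = κ (σ j))).symm
  exact (hfin (κ i)).mem_periodicPts_of_mapsTo (fun j (hj : κ j = κ i) => (hκσ j).trans hj)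
    hσinj.injOn rfl

end LevelSets

section BinaryStructure

variable {α β : Type*} {r : α → α → Prop} {s : β → β → Prop}

theorem IsHom.iterate {f : α → α} (hf : IsHom r r f) (n : ℕ) : IsHom r r f^[n] := by
  induction n with
  | zero => exact fun _ _ h => h
  | succ n ih => exact fun x y h => ih _ _ (hf x y h)

theorem IsCond.iterate {f : α → α} (hf : IsCond r r f) (n : ℕ) : IsCond r r f^[n] :=
  ⟨hf.1.iterate n, hf.2.iterate n⟩

theorem IsHom.eqvGen {f : α → β} (hf : IsHom r s f) {x y : α} (h : Relation.EqvGen r x y) :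
    Relation.EqvGen s (f x) (f y) := by
  induction h with
  | rel x y h => exact .rel _ _ (hf x y h)
  | refl x => exact .refl _
  | symm x y _ ih => exact .symm _ _ ih
  | trans x y z _ _ ih₁ ih₂ => exact .trans _ _ _ ih₁ ih₂

end BinaryStructure

section DisjointUnion

variable {I J : Type*} {X : I → Type*} {Y : J → Type*}
  {R : ∀ i, X i → X i → Prop} {S : ∀ j, Y j → Y j → Prop}

theorem unionRel_mk_mk {i : I} {x y : X i} : unionRel R ⟨i, x⟩ ⟨i, y⟩ ↔ R i x y :=
  ⟨fun ⟨_, h⟩ => h, fun h => ⟨rfl, h⟩⟩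

theorem fst_eq_of_eqvGen_unionRel {a b : Σ i, X i} (h : Relation.EqvGen (unionRel R) a b) :
    a.1 = b.1 :=
  congrArg (Quot.lift Sigma.fst fun _ _ h => h.1) (Quot.eqvGen_sound h)

theorem fst_apply_mk_eq_of_connected {f : (Σ i, X i) → Σ j, Y j}
    (hf : IsHom (unionRel R) (unionRel S) f) {i : I} (hconn : Connected (R i)) (x y : X i) :
    (f ⟨i, x⟩).1 = (f ⟨i, y⟩).1 :=
  fst_eq_of_eqvGen_unionRel (R := S) <|
    IsHom.eqvGen (r := R i) (fun _ _ h => hf _ _ (unionRel_mk_mk.mpr h)) (hconn.2 x y)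

theorem exists_apply_mk_eq_mk {f : (Σ i, X i) → Σ j, Y j} {i : I} {j : J}
    (h : ∀ x, (f ⟨i, x⟩).1 = j) : ∃ F : X i → Y j, ∀ x, f ⟨i, x⟩ = ⟨j, F x⟩ := by
  have hmk : ∀ p : Σ j, Y j, p.1 = j → ∃ z, p = ⟨j, z⟩ := by
    rintro ⟨_, z⟩ rfl
    exact ⟨z, rfl⟩
  choose F hF using fun x => hmk _ (h x)
  exact ⟨F, hF⟩

theorem mk_le_mk_of_injective_of_fst_eq {f : (Σ i, X i) → Σ i, X i} (hf : Injective f)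
    {i j : I} (h : ∀ x, (f ⟨i, x⟩).1 = j) : Cardinal.mk (X i) ≤ Cardinal.mk (X j) := by
  obtain ⟨F, hF⟩ := exists_apply_mk_eq_mk h
  exact Cardinal.mk_le_of_injective (f := F) fun x y e =>
    sigma_mk_injective (hf (by rw [hF, hF, e]))

/- `g` restricts to a self-condensation of `X i`, which is an automorphism by reversibility. -/
theorem rel_of_unionRel_apply_mk {g : (Σ i, X i) → Σ i, X i}
    (hg : IsCond (unionRel R) (unionRel R) g) {i : I} (hrev : Reversible (R i))
    (hfib : ∀ p, (g p).1 = i ↔ p.1 = i) {x y : X i}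
    (hxy : unionRel R (g ⟨i, x⟩) (g ⟨i, y⟩)) : R i x y := by
  obtain ⟨G, hG⟩ := exists_apply_mk_eq_mk fun x => (hfib ⟨i, x⟩).mpr rfl
  have hGinj : Injective G := fun x y e => sigma_mk_injective (hg.1.1 (by rw [hG, hG, e]))
  have hGsurj : Surjective G := by
    intro z
    obtain ⟨⟨j, w⟩, hw⟩ := hg.1.2 ⟨i, z⟩
    obtain rfl : j = i := (hfib _).mp (congrArg Sigma.fst hw)
    exact ⟨w, sigma_mk_injective ((hG w).symm.trans hw)⟩
  have hGhom : IsHom (R i) (R i) G := fun a b h => by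
    simpa only [hG, unionRel_mk_mk] using hg.2 _ _ (unionRel_mk_mk.mpr h)
  rw [hG, hG, unionRel_mk_mk] at hxy
  exact ((hrev G ⟨⟨hGinj, hGsurj⟩, hGhom⟩).2 x y).mpr hxy

end DisjointUnion

/-- **Corollary (Statement 9).** Under condition (∗) — `⟨X i, R i⟩`, `i ∈ I`, pairwise disjoint
(realized by a sigma type), connected and reversible binary structures — if the sequence of
cardinalities `⟨|X i| : i ∈ I⟩` is finite-to-one (there is no infinite `J ⊆ I` on which all the
cardinalities coincide), then the disjoint union `⋃_{i∈I} X i` is reversible. -/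
theorem stmt9 {I : Type u} {X : I → Type v} (R : ∀ i, X i → X i → Prop)
    (hconn : ∀ i, Connected (R i)) (hrev : ∀ i, Reversible (R i))
    (hfto : ¬ ∃ J : Set I, J.Infinite ∧
      ∀ i ∈ J, ∀ j ∈ J, Cardinal.mk (X i) = Cardinal.mk (X j)) :
    Reversible (unionRel R) := by
  intro f hf
  let x₀ : ∀ i, X i := fun i => (hconn i).1.some
  let σ : I → I := fun i => (f ⟨i, x₀ i⟩).1
  have hfst : Semiconj Sigma.fst f σ := fun ⟨i, x⟩ =>
    fst_apply_mk_eq_of_connected hf.2 (hconn i) x (x₀ i)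
  have hσ : Surjective σ := fun j => by
    obtain ⟨p, hp⟩ := hf.1.2 ⟨j, x₀ j⟩
    exact ⟨p.1, (hfst p).symm.trans (congrArg Sigma.fst hp)⟩
  have hfin : ∀ c, {i | Cardinal.mk (X i) = c}.Finite := fun c =>
    not_not.mp fun hc => hfto ⟨_, hc, fun i hi j hj => hi.trans hj.symm⟩
  obtain ⟨hσinj, hper⟩ := hσ.injective_and_periodicPts_eq_univ
    (fun i => mk_le_mk_of_injective_of_fst_eq hf.1.1 fun x => hfst ⟨i, x⟩) hfin
  refine ⟨hf.1, fun ⟨i, x⟩ ⟨j, y⟩ => ⟨hf.2 _ _, fun hxy => ?_⟩⟩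
  obtain rfl : i = j := hσinj ((hfst _).symm.trans (hxy.1.trans (hfst _)))
  obtain ⟨_, hn, hi⟩ := mem_periodicPts.mp (hper ▸ mem_univ i)
  obtain ⟨n, rfl⟩ := Nat.exists_eq_add_one_of_ne_zero hn.ne'
  have hfib : ∀ p, (f^[n + 1] p).1 = i ↔ p.1 = i := fun p => by
    rw [(hfst.iterate_right (n + 1)) p]
    conv_lhs => rw [← hi]
    exact (hσinj.iterate (n + 1)).eq_iff
  refine unionRel_mk_mk.mpr (rel_of_unionRel_apply_mk (hf.iterate (n + 1)) (hrev i) hfib ?_)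
  simpa only [iterate_succ_apply] using hf.2.iterate n _ _ hxy
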